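/- For |q| < 1, the 4-fold sum ∑_{n₁,n₂,n₃,n₄≥0} q^{n₁+n₂+n₃+n₄+n₁n₂+n₂n₃+n₃n₄} / ((q;q)_{n₁}(q;q)_{n₂}(q;q)_{n₃}(q;q)_{n₄}) equals q^{-1}/(q;q)_∞² · ∑_{n≥1} qⁿ/(1-qⁿ). -/

import Mathlib

/-!
For fixed middle indices `n₁ = a`, `n₂ = b` the exponent is `a + b + ab + n₀(a+1) + n₃(b+1)`, so
the sums over `n₀` and `n₃` are instances of Euler's identity `∑ xⁿ/(q;q)ₙ = 1/(x;q)_∞` at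
`x = q^(a+1)` and `x = q^(b+1)`, each contributing `(q;q)_a/(q;q)_∞` resp. `(q;q)_b/(q;q)_∞`.
What remains is `(q;q)_∞⁻² ∑_{a,b} q^(a+b+ab)`, and the geometric sum over `b` turns it into
`(q;q)_∞⁻² ∑_a q^a/(1-q^(a+1))`.

Euler's identity comes from the functional equation `F(qx) = (1-x)F(x)` of
`F(x) = ∑ xⁿ/(q;q)ₙ`: iterating gives `F(qᴺx) = (x;q)_N F(x)`, and `F(qᴺx) → F(0) = 1`.
-/

/-- The finite q-Pochhammer symbol `(q;q)_n`. -/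
noncomputable def qPoch (q : ℂ) (n : ℕ) : ℂ := ∏ i ∈ Finset.range n, (1 - q ^ (i + 1))

/-- The infinite q-Pochhammer symbol `(q;q)_∞`. -/
noncomputable def qPochInf (q : ℂ) : ℂ := ∏' i : ℕ, (1 - q ^ (i + 1))

/-- The infinite q-Pochhammer symbol `(a;q)_∞ = ∏_{i≥0} (1 - a q^i)`. -/
noncomputable def pochInf (a q : ℂ) : ℂ := ∏' i : ℕ, (1 - a * q ^ i)

open Finset Filter Topology

section

variable {q : ℂ}

lemma qPoch_zero (q : ℂ) : qPoch q 0 = 1 := prod_range_zero _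

lemma qPoch_succ (q : ℂ) (n : ℕ) : qPoch q (n + 1) = qPoch q n * (1 - q ^ (n + 1)) :=
  prod_range_succ _ n

lemma one_sub_ne_zero_of_norm_lt_one {z : ℂ} (hz : ‖z‖ < 1) : 1 - z ≠ 0 := by
  rw [sub_ne_zero]
  rintro rfl
  simp at hz

lemma norm_pow_succ_lt_one (hq : ‖q‖ < 1) (n : ℕ) : ‖q ^ (n + 1)‖ < 1 := by
  rw [norm_pow]
  exact pow_lt_one₀ (norm_nonneg q) hq n.succ_ne_zero

lemma qPoch_ne_zero (hq : ‖q‖ < 1) (n : ℕ) : qPoch q n ≠ 0 :=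
  prod_ne_zero_iff.2 fun i _ => one_sub_ne_zero_of_norm_lt_one (norm_pow_succ_lt_one hq i)

lemma norm_pow_mul_le (hq : ‖q‖ < 1) (x : ℂ) (n : ℕ) : ‖q ^ n * x‖ ≤ ‖x‖ := by
  rw [norm_mul, norm_pow]
  exact mul_le_of_le_one_left (norm_nonneg x) (pow_le_one₀ (norm_nonneg q) hq.le)

/-- Ratio test: consecutive terms have ratio `x / (1 - q ^ (n + 1)) → x`. -/
lemma summable_norm_pow_div_qPoch (hq : ‖q‖ < 1) {x : ℂ} (hx : ‖x‖ < 1) :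
    Summable fun n => ‖x ^ n / qPoch q n‖ := by
  have hlim : Tendsto (fun n : ℕ => ‖x‖ / ‖1 - q ^ (n + 1)‖) atTop (𝓝 ‖x‖) := by
    have h : Tendsto (fun n : ℕ => 1 - q ^ (n + 1)) atTop (𝓝 1) := by
      simpa using tendsto_const_nhds.sub
        ((tendsto_pow_atTop_nhds_zero_of_norm_lt_one hq).comp (tendsto_add_atTop_nat 1))
    simpa [div_eq_mul_inv] using (h.norm.inv₀ (by simp)).const_mul ‖x‖
  have hr : ‖x‖ < (‖x‖ + 1) / 2 := by linarith
  refine summable_of_ratio_norm_eventually_le (r := (‖x‖ + 1) / 2) (by linarith) ?_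
  filter_upwards [hlim.eventually (eventually_le_nhds hr)] with n hn
  rw [norm_norm, norm_norm, pow_succ, qPoch_succ, mul_div_mul_comm, norm_mul, mul_comm,
    norm_div x]
  exact mul_le_mul_of_nonneg_right hn (norm_nonneg _)

lemma tsum_mul_pow_div_qPoch (hq : ‖q‖ < 1) {x : ℂ} (hx : ‖x‖ < 1) :
    ∑' n, (q * x) ^ n / qPoch q n = (1 - x) * ∑' n, x ^ n / qPoch q n := by
  have hqx : ‖q * x‖ < 1 := by simpa using (norm_pow_mul_le hq x 1).trans_lt hx
  have hs := (summable_norm_pow_div_qPoch hq hx).of_norm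
  have hs' := (summable_norm_pow_div_qPoch hq hqx).of_norm
  have hstep : ∀ n, x ^ (n + 1) / qPoch q (n + 1) - (q * x) ^ (n + 1) / qPoch q (n + 1)
      = x * (x ^ n / qPoch q n) := by
    intro n
    have := one_sub_ne_zero_of_norm_lt_one (norm_pow_succ_lt_one hq n)
    rw [qPoch_succ, mul_pow, ← sub_div, ← one_sub_mul, mul_comm, mul_div_mul_right _ _ this,
      pow_succ, mul_comm, mul_div_assoc]
  calc ∑' n, (q * x) ^ n / qPoch q n
      = ∑' n, x ^ n / qPoch q n - ∑' n, (x ^ n / qPoch q n - (q * x) ^ n / qPoch q n) := by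
        rw [hs.tsum_sub hs', sub_sub_cancel]
    _ = (1 - x) * ∑' n, x ^ n / qPoch q n := by
        rw [(hs.sub hs').tsum_eq_zero_add]
        simp only [hstep, tsum_mul_left, pow_zero, sub_self, zero_add]
        ring

lemma tsum_pow_mul_pow_div_qPoch (hq : ‖q‖ < 1) {x : ℂ} (hx : ‖x‖ < 1) (N : ℕ) :
    ∑' n, (q ^ N * x) ^ n / qPoch q n
      = (∏ i ∈ range N, (1 - x * q ^ i)) * ∑' n, x ^ n / qPoch q n := by
  induction N with
  | zero => simp
  | succ N ih =>
    rw [pow_succ', mul_assoc, tsum_mul_pow_div_qPoch hq ((norm_pow_mul_le hq x N).trans_lt hx),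
      ih, prod_range_succ]
    ring

lemma tendsto_tsum_pow_mul_pow_div_qPoch (hq : ‖q‖ < 1) {x : ℂ} (hx : ‖x‖ < 1) :
    Tendsto (fun N : ℕ => ∑' n, (q ^ N * x) ^ n / qPoch q n) atTop (𝓝 1) := by
  have hlim : Tendsto (fun N : ℕ => q ^ N * x) atTop (𝓝 0) := by
    simpa using (tendsto_pow_atTop_nhds_zero_of_norm_lt_one hq).mul_const x
  have hsum : ∑' n, (0 : ℂ) ^ n / qPoch q n = 1 := by
    rw [tsum_eq_single 0 fun n hn => by simp [hn]]
    simp [qPoch_zero]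
  rw [← hsum]
  refine tendsto_tsum_of_dominated_convergence (summable_norm_pow_div_qPoch hq hx)
    (fun n => (((continuous_pow n).div_const _).tendsto 0).comp hlim) (.of_forall fun N n => ?_)
  rw [norm_div, norm_div, norm_pow, norm_pow]
  gcongr
  exact norm_pow_mul_le hq x N

lemma multipliable_one_sub_mul_pow (hq : ‖q‖ < 1) (x : ℂ) :
    Multipliable fun i : ℕ => 1 - x * q ^ i := by
  simpa [sub_eq_add_neg] using multipliable_one_add_of_summable (f := fun i : ℕ => -(x * q ^ i))
    (by simpa using (summable_norm_geometric_of_norm_lt_one hq).mul_left ‖x‖)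

theorem tsum_pow_div_qPoch_mul_pochInf (hq : ‖q‖ < 1) {x : ℂ} (hx : ‖x‖ < 1) :
    (∑' n, x ^ n / qPoch q n) * pochInf x q = 1 := by
  have h := (multipliable_one_sub_mul_pow hq x).hasProd.tendsto_prod_nat.mul_const
    (∑' n, x ^ n / qPoch q n)
  simp_rw [← tsum_pow_mul_pow_div_qPoch hq hx] at h
  rw [mul_comm, pochInf]
  exact tendsto_nhds_unique h (tendsto_tsum_pow_mul_pow_div_qPoch hq hx)

lemma qPoch_mul_pochInf (hq : ‖q‖ < 1) (k : ℕ) :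
    qPoch q k * pochInf (q ^ (k + 1)) q = qPochInf q := by
  have hshift : ∀ i, 1 - q ^ (k + 1) * q ^ i = 1 - q ^ (i + k + 1) := fun i => by
    rw [← pow_add]; ring_nf
  rw [pochInf, tprod_congr hshift]
  exact Multipliable.prod_mul_tprod_nat_mul' (f := fun i => 1 - q ^ (i + 1))
    ((multipliable_one_sub_mul_pow hq (q ^ (k + 1))).congr hshift)

theorem tsum_pow_succ_pow_div_qPoch (hq : ‖q‖ < 1) (k : ℕ) :
    ∑' n, (q ^ (k + 1)) ^ n / qPoch q n = qPoch q k / qPochInf q := by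
  rw [← qPoch_mul_pochInf hq k, div_mul_cancel_left₀ (qPoch_ne_zero hq k)]
  exact eq_inv_of_mul_eq_one_left (tsum_pow_div_qPoch_mul_pochInf hq (norm_pow_succ_lt_one hq k))

lemma tsum_pow_add_add_mul (hq : ‖q‖ < 1) :
    ∑' p : ℕ × ℕ, q ^ (p.1 + p.2 + p.1 * p.2) = ∑' a, q ^ a / (1 - q ^ (a + 1)) := by
  have hsum : Summable fun p : ℕ × ℕ => q ^ (p.1 + p.2 + p.1 * p.2) := by
    refine .of_norm_bounded ((summable_norm_geometric_of_norm_lt_one hq).mul_norm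
      (summable_norm_geometric_of_norm_lt_one hq)) fun p => ?_
    rw [← pow_add, norm_pow, norm_pow]
    exact pow_le_pow_of_le_one (norm_nonneg q) hq.le (by omega)
  rw [hsum.tsum_prod]
  refine tsum_congr fun a => ?_
  have hsplit : ∀ b, q ^ (a + b + a * b) = q ^ a * (q ^ (a + 1)) ^ b := fun b => by
    rw [← pow_mul, ← pow_add]; ring_nf
  simp_rw [hsplit, tsum_mul_left, tsum_geometric_of_norm_lt_one (norm_pow_succ_lt_one hq a),
    div_eq_mul_inv]

lemma norm_pow_div_qPoch_le {x y : ℂ} (h : ‖x‖ ≤ ‖y‖) (n : ℕ) :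
    ‖x ^ n / qPoch q n‖ ≤ ‖y ^ n / qPoch q n‖ := by
  rw [norm_div, norm_div, norm_pow, norm_pow]
  gcongr

/-- The summand at `(n₀, n₁, n₂, n₃) = (c, a, b, d)`, split into the part depending only on the
middle indices and the two Euler terms in `c` and `d`. -/
noncomputable def fourFoldTerm (q : ℂ) (a b c d : ℕ) : ℂ :=
  q ^ (a * b) * (q ^ a / qPoch q a * (q ^ b / qPoch q b))
    * ((q ^ (a + 1)) ^ c / qPoch q c * ((q ^ (b + 1)) ^ d / qPoch q d))

lemma pow_div_qPoch_eq_fourFoldTerm (a b c d : ℕ) :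
    q ^ (c + a + b + d + c * a + a * b + b * d) / (qPoch q c * qPoch q a * qPoch q b * qPoch q d)
      = fourFoldTerm q a b c d := by
  have hpow : q ^ (c + a + b + d + c * a + a * b + b * d)
      = q ^ (a * b) * q ^ a * q ^ b * (q ^ (a + 1)) ^ c * (q ^ (b + 1)) ^ d := by
    simp only [← pow_mul, ← pow_add]; ring_nf
  rw [hpow, fourFoldTerm]
  ring

lemma summable_fourFoldTerm (hq : ‖q‖ < 1) :
    Summable fun p : (ℕ × ℕ) × (ℕ × ℕ) => fourFoldTerm q p.1.1 p.1.2 p.2.1 p.2.2 := by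
  have hv := summable_norm_pow_div_qPoch hq hq
  have hsucc : ∀ k : ℕ, ‖q ^ (k + 1)‖ ≤ ‖q‖ := fun k => by
    rw [norm_pow]; exact pow_le_of_le_one (norm_nonneg q) hq.le k.succ_ne_zero
  refine .of_norm_bounded ((hv.mul_norm hv).mul_norm (hv.mul_norm hv)) fun ⟨⟨a, b⟩, c, d⟩ => ?_
  have hpow : ‖q ^ (a * b)‖ ≤ 1 := by
    rw [norm_pow]; exact pow_le_one₀ (norm_nonneg q) hq.le
  have hc := norm_pow_div_qPoch_le (q := q) (hsucc a) c
  have hd := norm_pow_div_qPoch_le (q := q) (hsucc b) d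
  simp only [fourFoldTerm, norm_mul]
  calc _ ≤ 1 * (‖q ^ a / qPoch q a‖ * ‖q ^ b / qPoch q b‖)
        * (‖q ^ c / qPoch q c‖ * ‖q ^ d / qPoch q d‖) := by gcongr
    _ = _ := by rw [one_mul]

lemma tsum_fourFoldTerm (hq : ‖q‖ < 1) (a b : ℕ) :
    ∑' w : ℕ × ℕ, fourFoldTerm q a b w.1 w.2 = q ^ (a + b + a * b) / qPochInf q ^ 2 := by
  simp only [fourFoldTerm]
  rw [tsum_mul_left, ← tsum_mul_tsum_of_summable_norm
    (summable_norm_pow_div_qPoch hq (norm_pow_succ_lt_one hq a))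
    (summable_norm_pow_div_qPoch hq (norm_pow_succ_lt_one hq b)),
    tsum_pow_succ_pow_div_qPoch hq, tsum_pow_succ_pow_div_qPoch hq]
  have ha := qPoch_ne_zero hq a
  have hb := qPoch_ne_zero hq b
  rw [pow_add, pow_add]
  field_simp

end

@[simps]
def finFourEquiv (α : Type*) : (Fin 4 → α) ≃ (α × α) × (α × α) where
  toFun n := ((n 1, n 2), (n 0, n 3))
  invFun p := ![p.2.1, p.1.1, p.1.2, p.2.2]
  left_inv n := by ext i; fin_cases i <;> rfl
  right_inv _ := rfl

theorem stmt9 (q : ℂ) (hq : ‖q‖ < 1) (hq0 : q ≠ 0) :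
    ∑' n : Fin 4 → ℕ,
        q ^ (n 0 + n 1 + n 2 + n 3 + n 0 * n 1 + n 1 * n 2 + n 2 * n 3)
          / (qPoch q (n 0) * qPoch q (n 1) * qPoch q (n 2) * qPoch q (n 3))
      = q⁻¹ / qPochInf q ^ 2 * ∑' n : ℕ, q ^ (n + 1) / (1 - q ^ (n + 1)) := by
  rw [← (finFourEquiv ℕ).symm.tsum_eq]
  simp only [finFourEquiv_symm_apply, Fin.isValue, Matrix.cons_val_zero, Matrix.cons_val_one,
    Matrix.cons_val, pow_div_qPoch_eq_fourFoldTerm]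
  rw [(summable_fourFoldTerm hq).tsum_prod]
  simp only [tsum_fourFoldTerm hq]
  have hlambert : ∀ n, q ^ n / (1 - q ^ (n + 1)) = q⁻¹ * (q ^ (n + 1) / (1 - q ^ (n + 1))) :=
    fun n => by rw [pow_succ', mul_div_assoc, inv_mul_cancel_left₀ hq0]
  rw [tsum_div_const, tsum_pow_add_add_mul hq, tsum_congr hlambert, tsum_mul_left]
  ring
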